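/- Local well-posedness of bilinearly perturbed linear homeomorphisms in quasi-Banach spaces. Let A : X → Y be a linear homeomorphism between quasi-Banach spaces X, Y, where ‖·‖_X^λ is subadditive for some λ ∈ (0,1], and let B : X × X → Y be a bounded bilinear map; write ‖A⁻¹B‖ for the norm of the bounded bilinear map (x,z) ↦ A⁻¹B(x,z). If y ∈ Y satisfies ‖A⁻¹y‖_X · ‖A⁻¹B‖ < 4^{−1/λ}, then the ball {x ∈ X : ‖x‖_X · ‖A⁻¹B‖ < 2^{−1/λ}} contains exactly one solution x of the equation Ax + B(x,x) = y; moreover this solution depends continuously on y within the set of y satisfying the above smallness condition (with respect to the metrics d(x,x′) = ‖x−x′‖_X^λ and d(y,y′) = ‖y−y′‖_Y^μ). -/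
import Mathlib


/- Local well-posedness of bilinearly perturbed linear homeomorphisms in
quasi-Banach spaces: if A : X → Y is a linear homeomorphism of quasi-Banach
spaces (with λ- resp. μ-subadditive quasi-norms), B : X × X → Y is a bounded
bilinear map, M = ‖A⁻¹B‖ and ‖A⁻¹y‖·M < 4^{-1/λ}, then the ball
{‖x‖·M < 2^{-1/λ}} contains exactly one solution of Ax + B(x,x) = y, depending
continuously on y. -/

noncomputable section
open Filter Topology

set_option maxHeartbeats 2000000 in
theorem statement2
    {X Y : Type*} [AddCommGroup X] [Module ℝ X] [AddCommGroup Y] [Module ℝ Y]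
    (NX : X → ℝ) (NY : Y → ℝ) (lam mu : ℝ)
    (hlam0 : 0 < lam) (hlam1 : lam ≤ 1) (hmu0 : 0 < mu) (hmu1 : mu ≤ 1)
    -- X is quasi-normed with λ-subadditive quasi-norm, and complete
    (hNXpos : ∀ x, 0 ≤ NX x) (hNX0 : ∀ x, NX x = 0 ↔ x = 0)
    (hNXsmul : ∀ (c : ℝ) (x), NX (c • x) = |c| * NX x)
    (hNXsub : ∀ x z, NX (x + z) ^ lam ≤ NX x ^ lam + NX z ^ lam)
    (hXcomplete : ∀ x : ℕ → X,
      (∀ ε > (0:ℝ), ∃ N, ∀ i ≥ N, ∀ j ≥ N, NX (x i - x j) ^ lam < ε) →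
      ∃ l : X, Tendsto (fun i => NX (x i - l)) atTop (𝓝 0))
    -- Y is quasi-normed with μ-subadditive quasi-norm, and complete
    (hNYpos : ∀ y, 0 ≤ NY y) (hNY0 : ∀ y, NY y = 0 ↔ y = 0)
    (hNYsmul : ∀ (c : ℝ) (y), NY (c • y) = |c| * NY y)
    (hNYsub : ∀ y z, NY (y + z) ^ mu ≤ NY y ^ mu + NY z ^ mu)
    (hYcomplete : ∀ y : ℕ → Y,
      (∀ ε > (0:ℝ), ∃ N, ∀ i ≥ N, ∀ j ≥ N, NY (y i - y j) ^ mu < ε) →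
      ∃ l : Y, Tendsto (fun i => NY (y i - l)) atTop (𝓝 0))
    -- A is a linear homeomorphism (a linear bijection, bounded both ways)
    (A : X ≃ₗ[ℝ] Y)
    (hAbd : ∃ C : ℝ, ∀ x, NY (A x) ≤ C * NX x)
    (hAinvbd : ∃ C : ℝ, ∀ y, NX (A.symm y) ≤ C * NY y)
    -- B is a bounded bilinear map
    (B : X →ₗ[ℝ] X →ₗ[ℝ] Y)
    (hBbd : ∃ C : ℝ, ∀ x z, NY (B x z) ≤ C * NX x * NX z)
    -- M = ‖A⁻¹B‖, the operator norm of the bounded bilinear map (x,z) ↦ A⁻¹B(x,z)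
    (M : ℝ)
    (hM : IsLUB {c : ℝ | ∃ x z, NX x ≤ 1 ∧ NX z ≤ 1 ∧ c = NX (A.symm (B x z))} M) :
    ∃ sol : Y → X,
      (∀ y : Y, NX (A.symm y) * M < (4:ℝ) ^ (-(1:ℝ) / lam) →
        NX (sol y) * M < (2:ℝ) ^ (-(1:ℝ) / lam) ∧
        A (sol y) + B (sol y) (sol y) = y ∧
        (∀ x : X, NX x * M < (2:ℝ) ^ (-(1:ℝ) / lam) → A x + B x x = y → x = sol y)) ∧
      (∀ y : Y, NX (A.symm y) * M < (4:ℝ) ^ (-(1:ℝ) / lam) →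
        ∀ ε > (0:ℝ), ∃ δ > (0:ℝ), ∀ y' : Y,
          NX (A.symm y') * M < (4:ℝ) ^ (-(1:ℝ) / lam) →
          NY (y' - y) ^ mu < δ → NX (sol y' - sol y) ^ lam < ε) := by
  classical
  obtain ⟨C0, hC0⟩ := hAinvbd
  set C : ℝ := max C0 0 with hCdef
  have hCnn : (0:ℝ) ≤ C := le_max_right _ _
  have hCbd : ∀ w, NX (A.symm w) ≤ C * NY w := fun w =>
    (hC0 w).trans (mul_le_mul_of_nonneg_right (le_max_left _ _) (hNYpos w))
  have hNX0' : NX (0:X) = 0 := (hNX0 0).mpr rfl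
  have hNXneg : ∀ x : X, NX (-x) = NX x := by
    intro x
    have h := hNXsmul (-1) x
    simpa using h
  have hlamne : lam ≠ 0 := ne_of_gt hlam0
  have hmune : mu ≠ 0 := ne_of_gt hmu0
  set n : X → ℝ := fun x => NX x ^ lam with hn
  have hnn : ∀ x, 0 ≤ n x := fun x => Real.rpow_nonneg (hNXpos x) lam
  have hn0 : n (0:X) = 0 := by
    show NX (0:X) ^ lam = 0
    rw [hNX0', Real.zero_rpow hlamne]
  have hnzero : ∀ x, n x = 0 → x = 0 := by
    intro x hx
    by_contra hne
    have h1 : NX x ≠ 0 := fun h => hne ((hNX0 x).mp h)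
    have h2 : 0 < NX x := lt_of_le_of_ne (hNXpos x) (Ne.symm h1)
    exact absurd hx (ne_of_gt (Real.rpow_pos_of_pos h2 lam))
  have hnneg : ∀ x : X, n (-x) = n x := by
    intro x
    show NX (-x) ^ lam = NX x ^ lam
    rw [hNXneg]
  have hnsub : ∀ x z : X, n (x + z) ≤ n x + n z := hNXsub
  have htri : ∀ x w z : X, n (x - z) ≤ n (x - w) + n (w - z) := by
    intro x w z
    have e : x - z = (x - w) + (w - z) := by abel
    rw [e]
    exact hnsub _ _
  have hM0 : 0 ≤ M := hM.1 ⟨0, 0, by simp [hNX0'], by simp [hNX0'], by simp [hNX0']⟩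
  -- bilinear bound
  have hBbound : ∀ x z, NX (A.symm (B x z)) ≤ M * NX x * NX z := by
    intro x z
    rcases eq_or_lt_of_le (hNXpos x) with hx0 | hxpos
    · have hx : x = 0 := (hNX0 x).mp hx0.symm
      simp [hx, hNX0']
    rcases eq_or_lt_of_le (hNXpos z) with hz0 | hzpos
    · have hz : z = 0 := (hNX0 z).mp hz0.symm
      simp [hz, hNX0']
    · have hu : NX ((NX x)⁻¹ • x) = 1 := by
        rw [hNXsmul, abs_of_pos (inv_pos.mpr hxpos)]
        field_simp
      have hv : NX ((NX z)⁻¹ • z) = 1 := by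
        rw [hNXsmul, abs_of_pos (inv_pos.mpr hzpos)]
        field_simp
      have hmem : NX (A.symm (B ((NX x)⁻¹ • x) ((NX z)⁻¹ • z))) ≤ M :=
        hM.1 ⟨_, _, hu.le, hv.le, rfl⟩
      have hBuv : A.symm (B ((NX x)⁻¹ • x) ((NX z)⁻¹ • z)) =
          ((NX x)⁻¹ * (NX z)⁻¹) • A.symm (B x z) := by
        rw [LinearMap.map_smul₂, LinearMap.map_smul, map_smul, map_smul, smul_smul]
      have hval : NX (A.symm (B ((NX x)⁻¹ • x) ((NX z)⁻¹ • z))) =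
          ((NX x)⁻¹ * (NX z)⁻¹) * NX (A.symm (B x z)) := by
        rw [hBuv, hNXsmul, abs_of_pos (by positivity)]
      rw [hval] at hmem
      have hinvpos : 0 < (NX x)⁻¹ * (NX z)⁻¹ := by positivity
      calc NX (A.symm (B x z))
          = (NX x * NX z) * (((NX x)⁻¹ * (NX z)⁻¹) * NX (A.symm (B x z))) := by
            field_simp
        _ ≤ (NX x * NX z) * M := by
            apply mul_le_mul_of_nonneg_left hmem (by positivity)
        _ = M * NX x * NX z := by ring
  set m : ℝ := M ^ lam with hm
  have hm0 : 0 ≤ m := Real.rpow_nonneg hM0 lam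
  have hBn : ∀ x z, n (A.symm (B x z)) ≤ m * n x * n z := by
    intro x z
    have h1 : NX (A.symm (B x z)) ^ lam ≤ (M * NX x * NX z) ^ lam :=
      Real.rpow_le_rpow (hNXpos _) (hBbound x z) hlam0.le
    have h2 : (M * NX x * NX z) ^ lam = m * (NX x ^ lam) * (NX z ^ lam) := by
      rw [Real.mul_rpow (mul_nonneg hM0 (hNXpos x)) (hNXpos z),
        Real.mul_rpow hM0 (hNXpos x)]
    rw [h2] at h1
    exact h1
  -- converting the smallness conditions
  have hpow : ∀ (t b : ℝ), 0 ≤ t → 0 < b →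
      (t * M < b ^ (-(1:ℝ) / lam) ↔ t ^ lam * m < b⁻¹) := by
    intro t b ht hb0
    have h1 : (t * M) ^ lam = t ^ lam * m := Real.mul_rpow ht hM0
    have h2 : (b ^ (-(1:ℝ) / lam)) ^ lam = b⁻¹ := by
      rw [← Real.rpow_mul hb0.le]
      have e : -(1:ℝ) / lam * lam = -1 := by field_simp
      rw [e, Real.rpow_neg_one]
    constructor
    · intro h
      rw [← h1, ← h2]
      exact Real.rpow_lt_rpow (mul_nonneg ht hM0) h hlam0
    · intro h
      by_contra hcon
      push_neg at hcon
      have h3 := Real.rpow_le_rpow (Real.rpow_nonneg hb0.le _) hcon hlam0.le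
      rw [h1, h2] at h3
      linarith
  -- difference of quadratic terms
  have hdiff : ∀ x x' : X,
      n (A.symm (B x x) - A.symm (B x' x')) ≤ m * (n x + n x') * n (x - x') := by
    intro x x'
    have e1 : B x x - B x' x' = B (x - x') x + (B x') (x - x') := by
      simp only [map_sub, LinearMap.sub_apply]
      abel
    have e2 : A.symm (B x x) - A.symm (B x' x') =
        A.symm (B (x - x') x) + A.symm ((B x') (x - x')) := by
      rw [← map_sub, e1, map_add]
    rw [e2]
    calc n (A.symm (B (x - x') x) + A.symm ((B x') (x - x')))
        ≤ n (A.symm (B (x - x') x)) + n (A.symm ((B x') (x - x'))) := hnsub _ _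
      _ ≤ m * n (x - x') * n x + m * n x' * n (x - x') := add_le_add (hBn _ _) (hBn _ _)
      _ = m * (n x + n x') * n (x - x') := by ring
  -- fixed point characterization
  have hfix : ∀ (w : Y) (x : X), (A x + B x x = w) ↔ x = A.symm w - A.symm (B x x) := by
    intro w x
    constructor
    · intro h
      have h2 : A x = w - B x x := by rw [← h]; abel
      have h3 : x = A.symm (w - B x x) := by rw [← h2, A.symm_apply_apply]
      exact h3.trans (map_sub A.symm w (B x x))
    · intro h
      have h2 : A x = A (A.symm w - A.symm (B x x)) := by rw [← h]
      rw [map_sub, A.apply_symm_apply, A.apply_symm_apply] at h2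
      rw [h2]
      abel
  -- uniqueness in the ball
  have huniq : ∀ (w : Y) (x x' : X), A x + B x x = w → A x' + B x' x' = w →
      n x * m < 1/2 → n x' * m < 1/2 → x = x' := by
    intro w x x' hx hx' hbx hbx'
    have hfx := (hfix w x).mp hx
    have hfx' := (hfix w x').mp hx'
    have e : x - x' = A.symm (B x' x') - A.symm (B x x) := by
      have h : x - x' = (A.symm w - A.symm (B x x)) - (A.symm w - A.symm (B x' x')) := by
        rw [← hfx, ← hfx']
      rw [h]
      abel
    by_contra hne
    have hpos : 0 < n (x - x') :=
      lt_of_le_of_ne (hnn _) (fun h => hne (sub_eq_zero.mp (hnzero _ h.symm)))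
    have h1 : n (x - x') ≤ m * (n x' + n x) * n (x' - x) := by
      calc n (x - x') = n (A.symm (B x' x') - A.symm (B x x)) := by rw [e]
        _ ≤ m * (n x' + n x) * n (x' - x) := hdiff x' x
    have h2 : n (x' - x) = n (x - x') := by
      rw [show x' - x = -(x - x') by abel, hnneg]
    rw [h2] at h1
    nlinarith [h1, hpos, hbx, hbx', hnn x, hnn x', hm0]
  -- the theta function
  set Θ : Y → ℝ := fun w => (1 - Real.sqrt (1 - 4 * (n (A.symm w) * m))) / 2 with hΘ
  have hθfacts : ∀ w : Y, n (A.symm w) * m < 1/4 →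
      0 ≤ Θ w ∧ Θ w < 1/2 ∧ n (A.symm w) * m + Θ w * Θ w = Θ w := by
    intro w hw
    have hs0 : 0 ≤ n (A.symm w) * m := mul_nonneg (hnn _) hm0
    have h4 : 0 < 1 - 4 * (n (A.symm w) * m) := by linarith
    have hsq : Real.sqrt (1 - 4 * (n (A.symm w) * m)) ^ 2 = 1 - 4 * (n (A.symm w) * m) :=
      Real.sq_sqrt h4.le
    have hsqpos : 0 < Real.sqrt (1 - 4 * (n (A.symm w) * m)) := Real.sqrt_pos.mpr h4
    have hsqle : Real.sqrt (1 - 4 * (n (A.symm w) * m)) ≤ 1 := by nlinarith [hsqpos]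
    refine ⟨by simp only [hΘ]; linarith, by simp only [hΘ]; linarith, ?_⟩
    simp only [hΘ]
    linear_combination hsq / 4
  have hsmall : ∀ w : Y, NX (A.symm w) * M < (4:ℝ) ^ (-(1:ℝ) / lam) →
      n (A.symm w) * m < 1/4 := by
    intro w hw
    have h := (hpow (NX (A.symm w)) 4 (hNXpos _) (by norm_num)).mp hw
    have e : (4:ℝ)⁻¹ = 1/4 := by norm_num
    rw [e] at h
    exact h
  -- main existence
  have main : ∀ w : Y, NX (A.symm w) * M < (4:ℝ) ^ (-(1:ℝ) / lam) →
      ∃ l : X, n l * m ≤ Θ w ∧ A l + B l l = w := by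
    intro w hw
    have hs := hsmall w hw
    obtain ⟨hθ0, hθhalf, hθeq⟩ := hθfacts w hs
    set f : X → X := fun z => A.symm w - A.symm (B z z) with hf
    have hTb : ∀ z, n (f z) ≤ n (A.symm w) + m * n z * n z := by
      intro z
      have h1 : n (f z) ≤ n (A.symm w) + n (A.symm (B z z)) := by
        have e : f z = A.symm w + -(A.symm (B z z)) := by
          simp only [hf]
          abel
        rw [e]
        calc n (A.symm w + -(A.symm (B z z)))
            ≤ n (A.symm w) + n (-(A.symm (B z z))) := hnsub _ _
          _ = n (A.symm w) + n (A.symm (B z z)) := by rw [hnneg]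
      have h2 := hBn z z
      linarith
    have hinv : ∀ z, n z * m ≤ Θ w → n (f z) * m ≤ Θ w := by
      intro z hz
      have h1 := hTb z
      have h3 := mul_le_mul_of_nonneg_right h1 hm0
      have h4 : (n z * m) * (n z * m) ≤ Θ w * Θ w :=
        mul_le_mul hz hz (mul_nonneg (hnn z) hm0) hθ0
      nlinarith [h3, h4, hθeq]
    have hcontr : ∀ z z', n z * m ≤ Θ w → n z' * m ≤ Θ w →
        n (f z - f z') ≤ (2 * Θ w) * n (z - z') := by
      intro z z' hz hz'
      have e : f z - f z' = A.symm (B z' z') - A.symm (B z z) := by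
        simp only [hf]
        abel
      rw [e]
      have h1 := hdiff z' z
      have h2 : n (z' - z) = n (z - z') := by
        rw [show z' - z = -(z - z') by abel, hnneg]
      rw [h2] at h1
      have h3 : m * (n z' + n z) ≤ 2 * Θ w := by nlinarith [hz, hz']
      calc n (A.symm (B z' z') - A.symm (B z z))
          ≤ m * (n z' + n z) * n (z - z') := h1
        _ ≤ 2 * Θ w * n (z - z') := mul_le_mul_of_nonneg_right h3 (hnn _)
    set xseq : ℕ → X := fun k => f^[k] 0 with hxseq
    have hx0 : xseq 0 = 0 := rfl
    have hxsucc : ∀ k, xseq (k+1) = f (xseq k) := by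
      intro k
      simp only [hxseq, Function.iterate_succ_apply']
    have hball : ∀ k, n (xseq k) * m ≤ Θ w := by
      intro k
      induction k with
      | zero => rw [hx0, hn0, zero_mul]; exact hθ0
      | succ k ih => rw [hxsucc]; exact hinv _ ih
    have hstep : ∀ k, n (xseq k - xseq (k+1)) ≤ (2 * Θ w)^k * n (A.symm w) := by
      intro k
      induction k with
      | zero =>
        have h0 : xseq 1 = A.symm w := by
          rw [hxsucc 0, hx0]
          simp only [hf]
          simp
        rw [hx0, h0, zero_sub, hnneg, pow_zero, one_mul]
      | succ k ih =>
        have hc := hcontr (xseq k) (xseq (k+1)) (hball k) (hball (k+1))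
        rw [← hxsucc (k+1), ← hxsucc k] at hc
        calc n (xseq (k+1) - xseq (k+1+1))
            ≤ 2 * Θ w * n (xseq k - xseq (k+1)) := hc
          _ ≤ 2 * Θ w * ((2 * Θ w)^k * n (A.symm w)) :=
            mul_le_mul_of_nonneg_left ih (by linarith)
          _ = (2 * Θ w)^(k+1) * n (A.symm w) := by ring
    have hq0 : 0 ≤ 2 * Θ w := by linarith
    have hq1 : 2 * Θ w < 1 := by linarith
    have h1q : (1:ℝ) - 2 * Θ w ≠ 0 := by linarith
    set q : ℝ := 2 * Θ w with hqdef
    set a : ℝ := n (A.symm w) with hadef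
    have ha0 : 0 ≤ a := hnn _
    set K : ℝ := a / (1 - q) with hKdef
    have hK0 : 0 ≤ K := div_nonneg ha0 (by linarith)
    have hKeq : a + q * K = K := by
      rw [hKdef]
      field_simp
      ring
    have hcauchy : ∀ d i, n (xseq i - xseq (i + d)) ≤ q ^ i * K := by
      intro d
      induction d with
      | zero =>
        intro i
        simp only [Nat.add_zero, sub_self]
        rw [hn0]
        exact mul_nonneg (pow_nonneg hq0 i) hK0
      | succ d ih =>
        intro i
        have hidx : i + (d + 1) = (i + 1) + d := by omega
        rw [hidx]
        calc n (xseq i - xseq (i+1+d))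
            ≤ n (xseq i - xseq (i+1)) + n (xseq (i+1) - xseq (i+1+d)) := htri _ _ _
          _ ≤ q^i * a + q^(i+1) * K := add_le_add (hstep i) (ih (i+1))
          _ = q^i * (a + q * K) := by ring
          _ = q^i * K := by rw [hKeq]
    have hCauchyCrit : ∀ ε > (0:ℝ), ∃ N, ∀ i ≥ N, ∀ j ≥ N, NX (xseq i - xseq j) ^ lam < ε := by
      intro ε hε
      have htend : Tendsto (fun N => q ^ N * K) atTop (𝓝 0) := by
        have h := tendsto_pow_atTop_nhds_zero_of_lt_one hq0 hq1
        simpa using h.mul_const K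
      obtain ⟨N, hN⟩ := eventually_atTop.mp (htend.eventually_lt_const hε)
      refine ⟨N, ?_⟩
      have key : ∀ i j : ℕ, N ≤ i → i ≤ j → NX (xseq i - xseq j) ^ lam < ε := by
        intro i j hNi hij
        obtain ⟨d, rfl⟩ : ∃ d, j = i + d := ⟨j - i, by omega⟩
        have h1 : n (xseq i - xseq (i+d)) ≤ q^i * K := hcauchy d i
        have h2 : q^i * K ≤ q^N * K :=
          mul_le_mul_of_nonneg_right (pow_le_pow_of_le_one hq0 hq1.le hNi) hK0
        calc NX (xseq i - xseq (i+d)) ^ lam = n (xseq i - xseq (i+d)) := rfl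
          _ ≤ q^N * K := le_trans h1 h2
          _ < ε := hN N le_rfl
      intro i hi j hj
      rcases le_total i j with h | h
      · exact key i j hi h
      · have hk := key j i hj h
        have e : NX (xseq i - xseq j) = NX (xseq j - xseq i) := by
          rw [show xseq i - xseq j = -(xseq j - xseq i) by abel, hNXneg]
        rw [e]
        exact hk
    obtain ⟨l, hl⟩ := hXcomplete xseq hCauchyCrit
    have hln : Tendsto (fun i => n (xseq i - l)) atTop (𝓝 0) := by
      have h := hl.rpow_const (p := lam) (Or.inr hlam0.le)
      rwa [Real.zero_rpow hlamne] at h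
    have hlball : n l * m ≤ Θ w := by
      have hle : ∀ i, n l * m ≤ n (xseq i - l) * m + Θ w := by
        intro i
        have e : l = (l - xseq i) + xseq i := by abel
        have h1 : n l ≤ n (l - xseq i) + n (xseq i) := by
          calc n l = n ((l - xseq i) + xseq i) := by rw [← e]
            _ ≤ n (l - xseq i) + n (xseq i) := hnsub _ _
        have h2 : n (l - xseq i) = n (xseq i - l) := by
          rw [show l - xseq i = -(xseq i - l) by abel, hnneg]
        have h3 := hball i
        have h4 := mul_le_mul_of_nonneg_right h1 hm0
        rw [h2] at h4
        nlinarith [h4, h3]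
      have htd : Tendsto (fun i => n (xseq i - l) * m + Θ w) atTop (𝓝 (0 * m + Θ w)) :=
        (hln.mul_const m).add_const (Θ w)
      rw [zero_mul, zero_add] at htd
      exact ge_of_tendsto' htd hle
    have hfl : n (f l - l) ≤ 0 := by
      have hz : ∀ i, n (f l - l) ≤ q * n (xseq i - l) + n (xseq (i+1) - l) := by
        intro i
        have h1 : n (f l - f (xseq i)) ≤ q * n (l - xseq i) := hcontr l (xseq i) hlball (hball i)
        have h3 : n (l - xseq i) = n (xseq i - l) := by
          rw [show l - xseq i = -(xseq i - l) by abel, hnneg]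
        calc n (f l - l) ≤ n (f l - f (xseq i)) + n (f (xseq i) - l) := htri _ _ _
          _ ≤ q * n (l - xseq i) + n (f (xseq i) - l) := by linarith [h1]
          _ = q * n (xseq i - l) + n (xseq (i+1) - l) := by rw [h3, ← hxsucc i]
      have htd : Tendsto (fun i => q * n (xseq i - l) + n (xseq (i+1) - l)) atTop
          (𝓝 (q * 0 + 0)) :=
        (hln.const_mul q).add (hln.comp (tendsto_add_atTop_nat 1))
      rw [mul_zero, zero_add] at htd
      exact ge_of_tendsto' htd hz
    have hfleq : f l = l := by
      have h0 : n (f l - l) = 0 := le_antisymm hfl (hnn _)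
      have h1 : f l - l = 0 := hnzero _ h0
      exact sub_eq_zero.mp h1
    have hfixl : l = A.symm w - A.symm (B l l) := by
      have h := hfleq
      simp only [hf] at h
      exact h.symm
    exact ⟨l, hlball, (hfix w l).mpr hfixl⟩
  choose solF hsolF using main
  refine ⟨fun y => if h : NX (A.symm y) * M < (4:ℝ) ^ (-(1:ℝ) / lam) then solF y h else 0,
    ?_, ?_⟩
  · intro y hy
    obtain ⟨hb, heq⟩ := hsolF y hy
    obtain ⟨hθ0, hθhalf, _⟩ := hθfacts y (hsmall y hy)
    simp only [dif_pos hy]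
    have hb2 : n (solF y hy) * m < 1/2 := by linarith
    refine ⟨?_, heq, ?_⟩
    · refine (hpow (NX (solF y hy)) 2 (hNXpos _) (by norm_num)).mpr ?_
      have e : (2:ℝ)⁻¹ = 1/2 := by norm_num
      rw [e]
      exact hb2
    · intro x hx hxeq
      have hx2 : n x * m < 1/2 := by
        have h := (hpow (NX x) 2 (hNXpos _) (by norm_num)).mp hx
        have e : (2:ℝ)⁻¹ = 1/2 := by norm_num
        rw [e] at h
        exact h
      exact huniq y x (solF y hy) hxeq heq hx2 hb2
  · intro y hy ε hε
    obtain ⟨hθ0, hθhalf, _⟩ := hθfacts y (hsmall y hy)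
    have hc0 : 0 < 1/2 - Θ y := by linarith
    have hClam0 : 0 ≤ C ^ lam := Real.rpow_nonneg hCnn lam
    set t : ℝ := ε * (1/2 - Θ y) / (C ^ lam + 1) with htdef
    have ht0 : 0 < t := by
      apply div_pos (mul_pos hε hc0)
      linarith
    refine ⟨t ^ (mu / lam), Real.rpow_pos_of_pos ht0 _, ?_⟩
    intro y' hy' hclose
    simp only [dif_pos hy, dif_pos hy']
    obtain ⟨hby, heqy⟩ := hsolF y hy
    obtain ⟨hby', heqy'⟩ := hsolF y' hy'
    obtain ⟨hθ0', hθhalf', _⟩ := hθfacts y' (hsmall y' hy')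
    have hfu := (hfix y' (solF y' hy')).mp heqy'
    have hfv := (hfix y (solF y hy)).mp heqy
    set u : X := solF y' hy'
    set v : X := solF y hy
    have e : u - v = A.symm (y' - y) + (A.symm (B v v) - A.symm (B u u)) := by
      have h : u - v = (A.symm y' - A.symm (B u u)) - (A.symm y - A.symm (B v v)) := by
        rw [← hfu, ← hfv]
      rw [h, map_sub]
      abel
    have h1 : n (u - v) ≤ n (A.symm (y' - y)) + n (A.symm (B v v) - A.symm (B u u)) := by
      rw [e]
      exact hnsub _ _
    have h2 := hdiff v u
    have h3 : n (v - u) = n (u - v) := by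
      rw [show v - u = -(u - v) by abel, hnneg]
    rw [h3] at h2
    have h4 : m * (n v + n u) * n (u - v) ≤ (Θ y + Θ y') * n (u - v) := by
      apply mul_le_mul_of_nonneg_right _ (hnn _)
      nlinarith [hby, hby']
    have h5 : n (u - v) * (1/2 - Θ y) ≤ n (A.symm (y' - y)) := by
      nlinarith [h1, h2, h4, mul_nonneg (hnn (u - v)) (show (0:ℝ) ≤ 1/2 - Θ y' by linarith)]
    have hP : n (A.symm (y' - y)) ≤ C ^ lam * NY (y' - y) ^ lam := by
      have h := Real.rpow_le_rpow (hNXpos _) (hCbd (y' - y)) hlam0.le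
      rwa [Real.mul_rpow hCnn (hNYpos _)] at h
    have hNYb : NY (y' - y) ^ lam < t := by
      have h := Real.rpow_lt_rpow (Real.rpow_nonneg (hNYpos _) mu) hclose
        (div_pos hlam0 hmu0)
      rw [← Real.rpow_mul (hNYpos _), ← Real.rpow_mul ht0.le] at h
      have e1 : mu * (lam / mu) = lam := by field_simp
      have e2 : mu / lam * (lam / mu) = 1 := by
        field_simp
      rw [e1, e2, Real.rpow_one] at h
      exact h
    have hfin : n (u - v) * (1/2 - Θ y) < ε * (1/2 - Θ y) := by
      calc n (u - v) * (1/2 - Θ y) ≤ n (A.symm (y' - y)) := h5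
        _ ≤ C ^ lam * NY (y' - y) ^ lam := hP
        _ ≤ C ^ lam * t := mul_le_mul_of_nonneg_left hNYb.le hClam0
        _ < (C ^ lam + 1) * t := by nlinarith [ht0]
        _ = ε * (1/2 - Θ y) := by
          rw [htdef]
          field_simp
    exact lt_of_mul_lt_mul_right (by exact hfin) (by linarith)
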